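/- Let V₁,...,Vₙ be vector spaces over a field F, each equipped with L vectors v_{j,1},...,v_{j,L}, and let Λ : V₁ × ... × Vₙ → F be an n-linear map. For any partition P₁ of {1,...,n}, the sum of Λ(v_{1,l_{P₁(1)}}, ..., v_{n,l_{P₁(n)}}) over tuples of indices (l_P)_{P ∈ P₁} in {1,...,L} that are pairwise distinct equals the sum over all partitions P coarser than or equal to P₁ of D(P₁,P) times the unrestricted sum of Λ(v_{1,l_{P(1)}}, ..., v_{n,l_{P(n)}}) over all (not necessarily distinct) tuples (l_P)_{P ∈ P}. -/

import Mathlib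

/-- `chainDiff a b` is the number of odd-cardinality chains minus the number of
even-cardinality chains from `a` to `b`: a chain from `a` to `b` is a nonempty
totally ordered finite family whose least element is `a` and greatest element is `b`. -/
noncomputable def chainDiff {α : Type*} [PartialOrder α] (a b : α) : ℤ :=
  ({C : Finset α | a ∈ C ∧ b ∈ C ∧ IsChain (· ≤ ·) (↑C : Set α) ∧
      (∀ x ∈ C, a ≤ x ∧ x ≤ b) ∧ Odd C.card}).ncard
  - ({C : Finset α | a ∈ C ∧ b ∈ C ∧ IsChain (· ≤ ·) (↑C : Set α) ∧
      (∀ x ∈ C, a ≤ x ∧ x ≤ b) ∧ Even C.card}).ncard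

noncomputable instance (n : ℕ) : Fintype (Setoid (Fin n)) := by
  classical
  exact Fintype.ofInjective (fun P : Setoid (Fin n) => P.r)
    (fun P Q h => by cases P; cases Q; simp only at h; subst h; rfl)

section ChainLemmas

open scoped Classical

variable {α : Type*} [PartialOrder α] [Fintype α]

/-- The finset of chains from `a` to `b`. -/
noncomputable def chainsF (a b : α) : Finset (Finset α) :=
  Finset.univ.filter (fun C => a ∈ C ∧ b ∈ C ∧ IsChain (· ≤ ·) (↑C : Set α) ∧
    ∀ x ∈ C, a ≤ x ∧ x ≤ b)

lemma chainDiff_eq_sum (a b : α) :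
    chainDiff a b = ∑ C ∈ chainsF a b, (-1 : ℤ) ^ (C.card + 1) := by
  classical
  have h1 : {C : Finset α | a ∈ C ∧ b ∈ C ∧ IsChain (· ≤ ·) (↑C : Set α) ∧
      (∀ x ∈ C, a ≤ x ∧ x ≤ b) ∧ Odd C.card}
      = ↑((chainsF a b).filter fun C => Odd C.card) := by
    ext C; simp [chainsF, and_assoc]
  have h2 : {C : Finset α | a ∈ C ∧ b ∈ C ∧ IsChain (· ≤ ·) (↑C : Set α) ∧
      (∀ x ∈ C, a ≤ x ∧ x ≤ b) ∧ Even C.card}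
      = ↑((chainsF a b).filter fun C => ¬ Odd C.card) := by
    ext C; simp [chainsF, and_assoc, Nat.not_odd_iff_even]
  have hsplit := Finset.sum_filter_add_sum_filter_not (chainsF a b)
    (fun C => Odd C.card) (fun C => (-1 : ℤ) ^ (C.card + 1))
  have hodd : ∑ C ∈ (chainsF a b).filter (fun C => Odd C.card), (-1 : ℤ) ^ (C.card + 1)
      = ((chainsF a b).filter fun C => Odd C.card).card := by
    rw [Finset.sum_congr rfl (fun C hC => ?_), Finset.sum_const, nsmul_eq_mul, mul_one]
    exact Even.neg_one_pow ((Finset.mem_filter.mp hC).2.add_one)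
  have heven : ∑ C ∈ (chainsF a b).filter (fun C => ¬ Odd C.card), (-1 : ℤ) ^ (C.card + 1)
      = -((chainsF a b).filter fun C => ¬ Odd C.card).card := by
    rw [Finset.sum_congr rfl (fun C hC => ?_), Finset.sum_const, nsmul_eq_mul, mul_neg_one]
    exact Odd.neg_one_pow
      ((Nat.not_odd_iff_even.mp (Finset.mem_filter.mp hC).2).add_one)
  rw [chainDiff, h1, h2, Set.ncard_coe_finset, Set.ncard_coe_finset, ← hsplit,
    hodd, heven]
  ring

lemma sum_chainDiff_interval (a b : α) (hab : a ≤ b) :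
    ∑ c ∈ Finset.univ.filter (fun c => a ≤ c ∧ c ≤ b), chainDiff a c
      = if a = b then 1 else 0 := by
  classical
  have hbij : Finset.univ.filter
      (fun C : Finset α => a ∈ C ∧ IsChain (· ≤ ·) (↑C : Set α) ∧
        ∀ x ∈ C, a ≤ x ∧ x ≤ b)
      = (Finset.univ.filter (fun c => a ≤ c ∧ c ≤ b)).biUnion (chainsF a) := by
    ext C
    simp only [Finset.mem_filter, Finset.mem_univ, true_and, Finset.mem_biUnion,
      chainsF]
    constructor
    · rintro ⟨ha, hch, hbd⟩
      obtain ⟨m, hm, hmax⟩ := C.exists_maximal ⟨a, ha⟩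
      have hmtop : ∀ x ∈ C, x ≤ m := by
        intro x hx
        rcases eq_or_ne x m with rfl | hne
        · exact le_refl x
        · rcases hch hx hm hne with h | h
          · exact h
          · exact absurd (lt_of_le_of_ne h (Ne.symm hne)) (not_lt_of_ge (hmax hx h))
      exact ⟨m, ⟨(hbd m hm).1, (hbd m hm).2⟩, ha, hm, hch,
        fun x hx => ⟨(hbd x hx).1, hmtop x hx⟩⟩
    · rintro ⟨c, ⟨hac, hcb⟩, ha, hc, hch, hbd⟩
      exact ⟨ha, hch, fun x hx => ⟨(hbd x hx).1, (hbd x hx).2.trans hcb⟩⟩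
  have hdisj : ∀ c₁ ∈ Finset.univ.filter (fun c => a ≤ c ∧ c ≤ b),
      ∀ c₂ ∈ Finset.univ.filter (fun c => a ≤ c ∧ c ≤ b), c₁ ≠ c₂ →
      Disjoint (chainsF a c₁) (chainsF a c₂) := by
    intro c₁ _ c₂ _ hne
    rw [Finset.disjoint_left]
    intro C h1 h2
    simp only [chainsF, Finset.mem_filter] at h1 h2
    exact hne (le_antisymm ((h2.2.2.2.2 c₁ h1.2.2.1).2) ((h1.2.2.2.2 c₂ h2.2.2.1).2))
  calc ∑ c ∈ Finset.univ.filter (fun c => a ≤ c ∧ c ≤ b), chainDiff a c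
      = ∑ c ∈ Finset.univ.filter (fun c => a ≤ c ∧ c ≤ b),
          ∑ C ∈ chainsF a c, (-1 : ℤ) ^ (C.card + 1) := by
        exact Finset.sum_congr rfl fun c _ => chainDiff_eq_sum a c
    _ = ∑ C ∈ Finset.univ.filter
          (fun C : Finset α => a ∈ C ∧ IsChain (· ≤ ·) (↑C : Set α) ∧
            ∀ x ∈ C, a ≤ x ∧ x ≤ b), (-1 : ℤ) ^ (C.card + 1) := by
        rw [hbij, Finset.sum_biUnion]
        exact fun c₁ h1 c₂ h2 hne => hdisj c₁ h1 c₂ h2 hne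
    _ = if a = b then 1 else 0 := ?_
  rcases eq_or_ne a b with rfl | hne
  · rw [if_pos rfl]
    have : Finset.univ.filter
        (fun C : Finset α => a ∈ C ∧ IsChain (· ≤ ·) (↑C : Set α) ∧
          ∀ x ∈ C, a ≤ x ∧ x ≤ a) = {({a} : Finset α)} := by
      ext C
      simp only [Finset.mem_filter, Finset.mem_univ, true_and, Finset.mem_singleton]
      constructor
      · rintro ⟨ha, -, hb⟩
        ext x
        simp only [Finset.mem_singleton]
        exact ⟨fun hx => le_antisymm (hb x hx).2 (hb x hx).1, fun h => h ▸ ha⟩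
      · rintro rfl
        refine ⟨Finset.mem_singleton_self a, ?_, ?_⟩
        · intro x hx y hy hxy
          simp only [Finset.coe_singleton, Set.mem_singleton_iff] at hx hy
          exact absurd (hx.trans hy.symm) hxy
        · intro x hx; simp_all
    rw [this]; simp
  · rw [if_neg hne]
    refine Finset.sum_involution
      (fun C _ => if b ∈ C then C.erase b else insert b C) ?_ ?_ ?_ ?_
    · intro C hC
      simp only [Finset.mem_filter, Finset.mem_univ, true_and] at hC
      by_cases hb : b ∈ C
      · rw [if_pos hb, Finset.card_erase_of_mem hb]
        have hcpos : 1 ≤ C.card := Finset.card_pos.mpr ⟨b, hb⟩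
        have : C.card - 1 + 1 = C.card := by omega
        rw [this, pow_succ]
        ring
      · rw [if_neg hb, Finset.card_insert_of_notMem hb]
        rw [pow_succ, pow_succ, pow_succ]
        ring
    · intro C hC _
      by_cases hb : b ∈ C
      · rw [if_pos hb]
        intro h
        exact absurd (h ▸ Finset.notMem_erase b C) (fun h' => h' hb)
      · rw [if_neg hb]
        intro h
        exact hb (h ▸ Finset.mem_insert_self b C)
    · intro C hC
      simp only [Finset.mem_filter, Finset.mem_univ, true_and] at hC ⊢
      obtain ⟨ha, hch, hbd⟩ := hC
      by_cases hb : b ∈ C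
      · rw [if_pos hb]
        refine ⟨Finset.mem_erase.mpr ⟨hne, ha⟩, ?_, ?_⟩
        · exact hch.mono (by simp [Finset.coe_subset])
        · intro x hx
          exact hbd x (Finset.mem_of_mem_erase hx)
      · rw [if_neg hb]
        refine ⟨Finset.mem_insert_of_mem ha, ?_, ?_⟩
        · rw [Finset.coe_insert]
          refine hch.insert ?_
          intro y hy _
          exact Or.inr (hbd y hy).2
        · intro x hx
          rcases Finset.mem_insert.mp hx with rfl | hx
          · exact ⟨hab, le_refl x⟩
          · exact hbd x hx
    · intro C hC
      by_cases hb : b ∈ C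
      · rw [if_pos hb, if_neg (Finset.notMem_erase b C), Finset.insert_erase hb]
      · rw [if_neg hb, if_pos (Finset.mem_insert_self b C), Finset.erase_insert hb]

end ChainLemmas

section PartitionLemmas

open scoped Classical

variable {n L : ℕ}

/-- The partition induced by a choice of indices for the blocks of `Q`. -/
noncomputable def kerS (Q : Setoid (Fin n)) (l : Quotient Q → Fin L) : Setoid (Fin n) :=
  Setoid.ker (fun j => l (Quotient.mk Q j))

lemma le_kerS (Q : Setoid (Fin n)) (l : Quotient Q → Fin L) : Q ≤ kerS Q l := by
  intro a b h
  show l (Quotient.mk Q a) = l (Quotient.mk Q b)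
  exact congrArg l (Quotient.sound h)

lemma out_rel (P : Setoid (Fin n)) (a : Fin n) : P ((Quotient.mk P a).out) a :=
  Quotient.eq.mp (Quotient.out_eq (Quotient.mk P a))

lemma full_eq_sum_inj {M : Type*} [AddCommMonoid M] (Q : Setoid (Fin n))
    (f : (Fin n → Fin L) → M) :
    ∑ l : Quotient Q → Fin L, f (fun j => l (Quotient.mk Q j))
      = ∑ P ∈ Finset.univ.filter (fun P : Setoid (Fin n) => Q ≤ P),
          ∑ l ∈ Finset.univ.filter (fun l : Quotient P → Fin L => Function.Injective l),
            f (fun j => l (Quotient.mk P j)) := by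
  rw [← Finset.sum_fiberwise_of_maps_to (g := kerS Q)
    (fun l _ => Finset.mem_filter.mpr ⟨Finset.mem_univ _, le_kerS Q l⟩)]
  refine Finset.sum_congr rfl fun P hP => ?_
  have hQP : Q ≤ P := (Finset.mem_filter.mp hP).2
  refine Finset.sum_nbij' (i := fun l (x : Quotient P) => l (Quotient.mk Q x.out))
    (j := fun l (y : Quotient Q) => l (Quotient.mk P y.out)) ?_ ?_ ?_ ?_ ?_
  · -- i maps into injective functions
    intro l hl
    have hK : kerS Q l = P := (Finset.mem_filter.mp hl).2
    subst hK
    have key : ∀ c : Fin n,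
        l (Quotient.mk Q (Quotient.mk (kerS Q l) c).out) = l (Quotient.mk Q c) :=
      fun c => out_rel (kerS Q l) c
    refine Finset.mem_filter.mpr ⟨Finset.mem_univ _, ?_⟩
    intro x y hxy
    induction x using Quotient.ind with | _ c =>
    induction y using Quotient.ind with | _ d =>
    simp only [key] at hxy
    exact Quotient.sound (hxy : kerS Q l c d)
  · -- j maps into fibers
    intro l hl
    have hinj : Function.Injective l := (Finset.mem_filter.mp hl).2
    refine Finset.mem_filter.mpr ⟨Finset.mem_univ _, ?_⟩
    refine Setoid.ext fun c d => ?_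
    show l (Quotient.mk P (Quotient.mk Q c).out) = l (Quotient.mk P (Quotient.mk Q d).out) ↔ P c d
    have h1 : Quotient.mk P (Quotient.mk Q c).out = Quotient.mk P c :=
      Quotient.sound (hQP (out_rel Q c))
    have h2 : Quotient.mk P (Quotient.mk Q d).out = Quotient.mk P d :=
      Quotient.sound (hQP (out_rel Q d))
    rw [h1, h2]
    exact ⟨fun h => Quotient.eq.mp (hinj h), fun h => congrArg l (Quotient.sound h)⟩
  · -- left inverse
    intro l hl
    have hK : kerS Q l = P := (Finset.mem_filter.mp hl).2
    subst hK
    funext y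
    induction y using Quotient.ind with | _ a =>
    exact ((kerS Q l).trans (out_rel (kerS Q l) _) (hQP (out_rel Q a)) :
      kerS Q l ((Quotient.mk (kerS Q l) (Quotient.mk Q a).out).out) a)
  · -- right inverse
    intro l hl
    funext x
    induction x using Quotient.ind with | _ c =>
    show l (Quotient.mk P (Quotient.mk Q (Quotient.mk P c).out).out) = l (Quotient.mk P c)
    refine congrArg l (Quotient.sound ?_)
    exact P.trans (hQP (out_rel Q _)) (out_rel P c)
  · -- values agree
    intro l hl
    have hK : kerS Q l = P := (Finset.mem_filter.mp hl).2
    subst hK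
    congr 1
    funext c
    exact ((kerS Q l).symm (out_rel (kerS Q l) c) :
      kerS Q l c ((Quotient.mk (kerS Q l) c).out))

end PartitionLemmas

open scoped Classical in
/-- The algebraic identity for multilinear maps: for any partition `P₁` of `{1,…,n}`,
the sum of `Λ(v_{1,l_{P₁(1)}},…,v_{n,l_{P₁(n)}})` over pairwise-distinct block indices
equals `∑_{P ≥ P₁} D(P₁,P)` times the unrestricted sum over block indices of `P`. -/
theorem multilinear_distinct_sum_identity (F : Type*) [Field F] (n L : ℕ)
    (V : Fin n → Type*) [∀ j, AddCommGroup (V j)] [∀ j, Module F (V j)]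
    (v : ∀ j, Fin L → V j) (Λ : MultilinearMap F V F) (P₁ : Setoid (Fin n)) :
    ∑ l ∈ Finset.univ.filter (fun l : Quotient P₁ → Fin L => Function.Injective l),
        Λ (fun j => v j (l (Quotient.mk P₁ j)))
    = ∑ P ∈ Finset.univ.filter (fun P : Setoid (Fin n) => P₁ ≤ P),
        chainDiff P₁ P •
          ∑ l : Quotient P → Fin L, Λ (fun j => v j (l (Quotient.mk P j))) := by
  classical
  set f : (Fin n → Fin L) → F := fun g => Λ (fun j => v j (g j)) with hf
  set I : Setoid (Fin n) → F := fun R =>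
    ∑ l ∈ Finset.univ.filter (fun l : Quotient R → Fin L => Function.Injective l),
      f (fun j => l (Quotient.mk R j)) with hI
  have hfull : ∀ P : Setoid (Fin n),
      (∑ l : Quotient P → Fin L, Λ (fun j => v j (l (Quotient.mk P j))))
        = ∑ R ∈ Finset.univ.filter (fun R : Setoid (Fin n) => P ≤ R), I R :=
    fun P => full_eq_sum_inj P f
  symm
  calc ∑ P ∈ Finset.univ.filter (fun P : Setoid (Fin n) => P₁ ≤ P),
        chainDiff P₁ P •
          ∑ l : Quotient P → Fin L, Λ (fun j => v j (l (Quotient.mk P j)))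
      = ∑ P ∈ Finset.univ.filter (fun P : Setoid (Fin n) => P₁ ≤ P),
          ∑ R ∈ Finset.univ.filter (fun R : Setoid (Fin n) => P ≤ R),
            chainDiff P₁ P • I R := by
        refine Finset.sum_congr rfl fun P _ => ?_
        rw [hfull P, Finset.smul_sum]
    _ = ∑ R ∈ Finset.univ.filter (fun R : Setoid (Fin n) => P₁ ≤ R),
          ∑ P ∈ Finset.univ.filter (fun P : Setoid (Fin n) => P₁ ≤ P ∧ P ≤ R),
            chainDiff P₁ P • I R := by
        refine Finset.sum_comm' ?_
        intro P R
        simp only [Finset.mem_filter, Finset.mem_univ, true_and]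
        exact ⟨fun ⟨h1, h2⟩ => ⟨⟨h1, h2⟩, h1.trans h2⟩, fun ⟨⟨h1, h2⟩, _⟩ => ⟨h1, h2⟩⟩
    _ = ∑ R ∈ Finset.univ.filter (fun R : Setoid (Fin n) => P₁ ≤ R),
          (if P₁ = R then I R else 0) := by
        refine Finset.sum_congr rfl fun R hR => ?_
        have hle : P₁ ≤ R := (Finset.mem_filter.mp hR).2
        rw [← Finset.sum_smul, sum_chainDiff_interval P₁ R hle]
        by_cases h : P₁ = R
        · rw [if_pos h, if_pos h, one_smul]
        · rw [if_neg h, if_neg h, zero_smul]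
    _ = ∑ l ∈ Finset.univ.filter (fun l : Quotient P₁ → Fin L => Function.Injective l),
          Λ (fun j => v j (l (Quotient.mk P₁ j))) := by
        rw [Finset.sum_ite_eq]
        rw [if_pos (Finset.mem_filter.mpr ⟨Finset.mem_univ _, le_refl P₁⟩)]
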